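/- arXiv:1611.04032 — 3 statements merged into one kernel-verified Lean document; each statement's English description precedes it below -/
import Mathlib

section
/- Let D ≥ 3, k ≥ 1, and let G be a closed bipartite (D+1)-colored graph with 2k vertices. Then (D+1)·(2/(D−1)!)·ω(G) + 2·F_1(G) = D(D+1) + Σ_{s≥2} (s(D−1) − D − 1)·F_s(G), where the sum runs over all face lengths s ≥ 2 occurring in G; moreover each coefficient s(D−1) − D − 1 with s ≥ 2 is nonnegative. -/
open scoped Classical

noncomputable section

/-- Number of cycles of a permutation of `Fin k`, counting fixed points
as cycles of length 1. -/
def numCycles {k : ℕ} (τ : Equiv.Perm (Fin k)) : ℕ :=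
  τ.cycleType.card + (Finset.univ.filter fun i => τ i = i).card

/-- `F^{c₁c₂}(G)`: the number of faces with colors `c₁c₂`, i.e. the number of
cycles of `(σ c₂)⁻¹ * σ c₁` (fixed points counting as cycles of length 1). -/
def faceCount (D k : ℕ) (σ : Fin (D + 1) → Equiv.Perm (Fin k)) (c₁ c₂ : Fin (D + 1)) : ℕ :=
  numCycles ((σ c₂)⁻¹ * σ c₁)

/-- `F(G)`: total number of faces. -/
def totalFaces (D k : ℕ) (σ : Fin (D + 1) → Equiv.Perm (Fin k)) : ℕ :=
  ∑ p ∈ Finset.univ.filter (fun p : Fin (D + 1) × Fin (D + 1) => p.1 < p.2),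
    faceCount D k σ p.1 p.2

/-- The degree `ω(G) := ((D−1)!/2) · (D + (D(D−1)/2)·k − F(G))`. -/
def degree (D k : ℕ) (σ : Fin (D + 1) → Equiv.Perm (Fin k)) : ℚ :=
  ((D - 1).factorial : ℚ) / 2 *
    ((D : ℚ) + (D : ℚ) * ((D : ℚ) - 1) / 2 * (k : ℚ) - (totalFaces D k σ : ℚ))

/-- `G` is connected: the subgroup generated by the `(σ c')⁻¹ * σ c` acts
transitively on `Fin k`. -/
def Connected (D k : ℕ) (σ : Fin (D + 1) → Equiv.Perm (Fin k)) : Prop :=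
  ∀ i j : Fin k, ∃ g ∈ Subgroup.closure
    {g : Equiv.Perm (Fin k) | ∃ c c' : Fin (D + 1), g = (σ c')⁻¹ * σ c}, g i = j

/-- A permutation of `Fin m` which is a single `m`-cycle. -/
def IsFullCycle {m : ℕ} (π : Equiv.Perm (Fin m)) : Prop :=
  π.IsCycle ∧ π.support = Finset.univ

/-- `Φ_π(G) := Σ_{q=0}^{D} F^{π^q(0), π^{q+1}(0)}(G)`, the face count of the
jacket associated to the `(D+1)`-cycle `π` on the colors. -/
def jacketFaces (D k : ℕ) (σ : Fin (D + 1) → Equiv.Perm (Fin k))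
    (π : Equiv.Perm (Fin (D + 1))) : ℕ :=
  ∑ q ∈ Finset.range (D + 1), faceCount D k σ ((π ^ q) 0) ((π ^ (q + 1)) 0)

/-- `g_π(G) := (2 + (D−1)·k − Φ_π(G))/2`, the genus of the jacket of `π`. -/
def jacketGenus (D k : ℕ) (σ : Fin (D + 1) → Equiv.Perm (Fin k))
    (π : Equiv.Perm (Fin (D + 1))) : ℚ :=
  (2 + ((D : ℚ) - 1) * (k : ℚ) - (jacketFaces D k σ π : ℚ)) / 2

/-- The number of cycles of length `s` of a permutation of `Fin k`
(fixed points counting as cycles of length 1). -/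
def numCyclesLen {k : ℕ} (τ : Equiv.Perm (Fin k)) (s : ℕ) : ℕ :=
  if s = 1 then (Finset.univ.filter fun i => τ i = i).card else τ.cycleType.count s

/-- `F_s(G)`: the number of faces of `G` with `2s` vertices. -/
def facesLen (D k : ℕ) (σ : Fin (D + 1) → Equiv.Perm (Fin k)) (s : ℕ) : ℕ :=
  ∑ p ∈ Finset.univ.filter (fun p : Fin (D + 1) × Fin (D + 1) => p.1 < p.2),
    numCyclesLen ((σ p.2)⁻¹ * σ p.1) s

/-!
The faces of colours `c₁c₂` are the cycles of the permutation `(σ c₂)⁻¹ * σ c₁` of `Fin k`,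
whose lengths add up to `k`. Summing over the `(D+1)D/2` pairs of colours gives the two counts
`F = Σ_s F_s` and `Σ_s s·F_s = (D+1)D·k/2`; the identity is a linear combination of them, since
`(D+1)·(2/(D−1)!)·ω = (D+1)(D + D(D−1)k/2 − F)`. For `s ≥ 2` the coefficient
`s(D−1) − D − 1` is at least `D − 3`.
-/

open Finset

namespace Equiv.Perm

variable {α : Type*} [Fintype α] [DecidableEq α]

theorem cycleType_toFinset_subset_Icc (τ : Perm α) :
    τ.cycleType.toFinset ⊆ Icc 2 (Fintype.card α) := fun s hs => by
  rw [Multiset.mem_toFinset] at hs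
  exact mem_Icc.2 ⟨two_le_of_mem_cycleType hs,
    (Multiset.le_sum_of_mem hs).trans τ.sum_cycleType_le⟩

theorem sum_Icc_count_cycleType_mul (τ : Perm α) (f : ℕ → ℕ) :
    ∑ s ∈ Icc 2 (Fintype.card α), τ.cycleType.count s * f s = (τ.cycleType.map f).sum := by
  rw [sum_multiset_map_count]
  refine (sum_subset τ.cycleType_toFinset_subset_Icc fun s _ hs => ?_).symm
  rw [Multiset.count_eq_zero_of_notMem (by simpa using hs), zero_mul]

theorem card_fixed_add_card_support (τ : Perm α) :
    #{i | τ i = i} + #τ.support = Fintype.card α := by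
  rw [support, card_filter_add_card_filter_not, card_univ]

end Equiv.Perm

theorem sum_Icc_numCyclesLen_mul {k : ℕ} (τ : Equiv.Perm (Fin k)) (f : ℕ → ℕ) :
    ∑ s ∈ Icc 2 k, numCyclesLen τ s * f s = (τ.cycleType.map f).sum := by
  have h := τ.sum_Icc_count_cycleType_mul f
  rw [Fintype.card_fin] at h
  rw [← h]
  refine sum_congr rfl fun s hs => ?_
  rw [numCyclesLen, if_neg (by rw [mem_Icc] at hs; omega)]

theorem numCycles_eq_numCyclesLen_one_add_sum {k : ℕ} (τ : Equiv.Perm (Fin k)) :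
    numCycles τ = numCyclesLen τ 1 + ∑ s ∈ Icc 2 k, numCyclesLen τ s := by
  have h := sum_Icc_numCyclesLen_mul τ 1
  simp only [Pi.one_apply, mul_one, Multiset.map_const', Multiset.sum_replicate,
    smul_eq_mul] at h
  rw [h, numCycles, numCyclesLen, if_pos rfl, add_comm]

theorem numCyclesLen_one_add_sum_mul {k : ℕ} (τ : Equiv.Perm (Fin k)) :
    numCyclesLen τ 1 + ∑ s ∈ Icc 2 k, s * numCyclesLen τ s = k := by
  have h := sum_Icc_numCyclesLen_mul τ id
  rw [Multiset.map_id, Equiv.Perm.sum_cycleType] at h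
  simp only [id, mul_comm] at h
  rw [h, numCyclesLen, if_pos rfl, τ.card_fixed_add_card_support, Fintype.card_fin]

theorem card_filter_fst_lt_snd (n : ℕ) : #{p : Fin n × Fin n | p.1 < p.2} = n.choose 2 := by
  rw [card_filter, Fintype.sum_prod_type, sum_comm]
  simp only [← card_filter, filter_gt_eq_Iio, Fin.card_Iio]
  rw [Fin.sum_univ_eq_sum_range (fun i => i) n, sum_range_id, Nat.choose_two_right]

section Faces

variable {D k : ℕ} (σ : Fin (D + 1) → Equiv.Perm (Fin k))

theorem totalFaces_eq_facesLen_one_add_sum :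
    totalFaces D k σ = facesLen D k σ 1 + ∑ s ∈ Icc 2 k, facesLen D k σ s := by
  simp only [totalFaces, faceCount, facesLen, numCycles_eq_numCyclesLen_one_add_sum,
    sum_add_distrib]
  rw [sum_comm]

theorem facesLen_one_add_sum_mul :
    facesLen D k σ 1 + ∑ s ∈ Icc 2 k, s * facesLen D k σ s = (D + 1).choose 2 * k := by
  simp only [facesLen, mul_sum]
  rw [sum_comm, ← sum_add_distrib]
  simp only [numCyclesLen_one_add_sum_mul, sum_const, smul_eq_mul, card_filter_fst_lt_snd]

end Faces

theorem face_length_identity_general (D k : ℕ) (hD : 3 ≤ D)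
    (σ : Fin (D + 1) → Equiv.Perm (Fin k)) :
    ((D : ℚ) + 1) * (2 / ((D - 1).factorial : ℚ)) * degree D k σ
        + 2 * (facesLen D k σ 1 : ℚ) =
      (D : ℚ) * ((D : ℚ) + 1)
        + ∑ s ∈ Finset.Icc 2 k,
            ((s : ℚ) * ((D : ℚ) - 1) - (D : ℚ) - 1) * (facesLen D k σ s : ℚ) ∧
    ∀ s : ℕ, 2 ≤ s → (0 : ℚ) ≤ (s : ℚ) * ((D : ℚ) - 1) - (D : ℚ) - 1 := by
  refine ⟨?_, fun s hs => ?_⟩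
  · have hF : (totalFaces D k σ : ℚ) =
        facesLen D k σ 1 + ∑ s ∈ Icc 2 k, (facesLen D k σ s : ℚ) := by
      exact_mod_cast totalFaces_eq_facesLen_one_add_sum σ
    have hS : (facesLen D k σ 1 : ℚ) + ∑ s ∈ Icc 2 k, (s : ℚ) * facesLen D k σ s =
        ((D + 1).choose 2 : ℕ) * k := by
      exact_mod_cast facesLen_one_add_sum_mul σ
    have hpairs : (((D + 1).choose 2 : ℕ) : ℚ) = ((D : ℚ) + 1) * D / 2 := by
      rw [Nat.cast_choose_two]; push_cast; ring
    have hsplit : ∑ s ∈ Icc 2 k, ((s : ℚ) * ((D : ℚ) - 1) - (D : ℚ) - 1) * facesLen D k σ s =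
        ((D : ℚ) - 1) * ∑ s ∈ Icc 2 k, (s : ℚ) * facesLen D k σ s
          - ((D : ℚ) + 1) * ∑ s ∈ Icc 2 k, (facesLen D k σ s : ℚ) := by
      rw [mul_sum, mul_sum, ← sum_sub_distrib]
      exact sum_congr rfl fun s _ => by ring
    have hcancel : 2 / ((D - 1).factorial : ℚ) * (((D - 1).factorial : ℚ) / 2) = 1 := by
      field_simp
    rw [hsplit, degree]
    linear_combination (-(D : ℚ) - 1) * hF + (1 - (D : ℚ)) * hS + (1 - (D : ℚ)) * k * hpairs
      + ((D : ℚ) + 1) * (D + D * (D - 1) / 2 * k - totalFaces D k σ) * hcancel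
  · have hs : (2 : ℚ) ≤ s := by exact_mod_cast hs
    have hD : (3 : ℚ) ≤ D := by exact_mod_cast hD
    nlinarith

/-- For any closed bipartite `(D+1)`-colored graph `G` with `2k` vertices,
`(D+1)·(2/(D−1)!)·ω(G) + 2·F₁(G) = D(D+1) + Σ_{s≥2} (s(D−1) − D − 1)·F_s(G)`, and each
coefficient `s(D−1) − D − 1` with `s ≥ 2` is nonnegative.  (The cycle lengths of a
permutation of `Fin k` are at most `k`, so the sum over `s ∈ [2, k]` runs over all face
lengths `s ≥ 2` occurring in `G`.) -/
theorem face_length_identity (D k : ℕ) (hD : 3 ≤ D) (hk : 1 ≤ k)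
    (σ : Fin (D + 1) → Equiv.Perm (Fin k)) :
    ((D : ℚ) + 1) * (2 / ((D - 1).factorial : ℚ)) * degree D k σ
        + 2 * (facesLen D k σ 1 : ℚ) =
      (D : ℚ) * ((D : ℚ) + 1)
        + ∑ s ∈ Finset.Icc 2 k,
            ((s : ℚ) * ((D : ℚ) - 1) - (D : ℚ) - 1) * (facesLen D k σ s : ℚ) ∧
    ∀ s : ℕ, 2 ≤ s → (0 : ℚ) ≤ (s : ℚ) * ((D : ℚ) - 1) - (D : ℚ) - 1 :=
  face_length_identity_general D k hD σ
end
end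

section
/- Let D ≥ 3, k ≥ 1, and let G be a closed bipartite (D+1)-colored graph with 2k vertices having no face with exactly two vertices, i.e. F_1(G) = 0. Then the degree of G satisfies ω(G) ≥ D·(D−1)!/2. -/
open scoped Classical

noncomputable section

/-! With no face of length `2`, every bicolored permutation `(σ c₂)⁻¹ * σ c₁` is fixed-point
free, so all its cycles have length `≥ 2` and it has at most `k / 2` cycles. Summing over the
`D(D+1)/2` color pairs gives `F(G) ≤ D(D+1)k/4`, which is at most `D(D-1)k/2` as soon as `D ≥ 3`;
plugged into the definition of `ω(G)` this leaves `ω(G) ≥ (D-1)!/2 · D`. -/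

theorem Equiv.Perm.two_mul_card_cycleType_le {α : Type*} [Fintype α] [DecidableEq α]
    (τ : Equiv.Perm α) : 2 * Multiset.card τ.cycleType ≤ Fintype.card α :=
  calc 2 * Multiset.card τ.cycleType = (Multiset.replicate (Multiset.card τ.cycleType) 2).sum := by
        rw [Multiset.sum_replicate, smul_eq_mul, mul_comm]
    _ ≤ τ.cycleType.sum :=
        Multiset.sum_le_sum_of_rel_le <| Multiset.rel_replicate_left.mpr
          ⟨rfl, fun _ hn => Equiv.Perm.two_le_of_mem_cycleType hn⟩
    _ ≤ Fintype.card α := τ.sum_cycleType_le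

theorem two_mul_numCycles_le {k : ℕ} (τ : Equiv.Perm (Fin k)) (hτ : numCyclesLen τ 1 = 0) :
    2 * numCycles τ ≤ k := by
  have hfix : (Finset.univ.filter fun i => τ i = i).card = 0 := by simpa [numCyclesLen] using hτ
  simpa [numCycles, hfix] using τ.two_mul_card_cycleType_le

theorem Fin.two_mul_card_filter_fst_lt_snd (n : ℕ) :
    2 * (Finset.univ.filter fun p : Fin n × Fin n => p.1 < p.2).card = n * (n - 1) := by
  have hcard :
      (Finset.univ.filter fun p : Fin n × Fin n => p.1 < p.2).card = ∑ c : Fin n, (c : ℕ) := by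
    rw [Finset.card_filter, Fintype.sum_prod_type_right]
    refine Finset.sum_congr rfl fun c _ => ?_
    rw [Finset.sum_boole, Nat.cast_id, ← Fin.card_Iio]
    congr 1
    ext; simp
  rw [hcard, Fin.sum_univ_eq_sum_range (fun i => i), mul_comm, Finset.sum_range_id_mul_two]

theorem four_mul_totalFaces_le (D k : ℕ) (σ : Fin (D + 1) → Equiv.Perm (Fin k))
    (hF₁ : facesLen D k σ 1 = 0) : 4 * totalFaces D k σ ≤ (D + 1) * D * k := by
  set P := Finset.univ.filter fun p : Fin (D + 1) × Fin (D + 1) => p.1 < p.2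
  have hface : ∀ p ∈ P, 2 * faceCount D k σ p.1 p.2 ≤ k := fun p hp =>
    two_mul_numCycles_le _ (Finset.sum_eq_zero_iff.mp hF₁ p hp)
  calc 4 * totalFaces D k σ = 2 * ∑ p ∈ P, 2 * faceCount D k σ p.1 p.2 := by
        rw [totalFaces, ← Finset.mul_sum]; ring
    _ ≤ 2 * ∑ _p ∈ P, k := Nat.mul_le_mul_left 2 (Finset.sum_le_sum hface)
    _ = (D + 1) * D * k := by
        rw [Finset.sum_const, smul_eq_mul, ← mul_assoc, Fin.two_mul_card_filter_fst_lt_snd]; simp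

theorem degree_sub_eq (D k : ℕ) (σ : Fin (D + 1) → Equiv.Perm (Fin k)) :
    degree D k σ - (D : ℚ) * ((D - 1).factorial : ℚ) / 2 =
      ((D - 1).factorial : ℚ) / 8 * (2 * (D : ℚ) * ((D : ℚ) - 1) * k - 4 * totalFaces D k σ) := by
  rw [degree]; ring

theorem no_short_face_degree_lower_bound_general (D k : ℕ) (hD : 3 ≤ D)
    (σ : Fin (D + 1) → Equiv.Perm (Fin k)) (hF₁ : facesLen D k σ 1 = 0) :
    (D : ℚ) * ((D - 1).factorial : ℚ) / 2 ≤ degree D k σ := by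
  have hfaces : (4 * totalFaces D k σ : ℚ) ≤ (D + 1) * D * k := by
    exact_mod_cast four_mul_totalFaces_le D k σ hF₁
  have hD' : (3 : ℚ) ≤ D := by exact_mod_cast hD
  have hslack : (0 : ℚ) ≤ 2 * D * (D - 1) * k - 4 * totalFaces D k σ := by
    nlinarith [k.cast_nonneg (α := ℚ)]
  rw [← sub_nonneg, degree_sub_eq]
  exact mul_nonneg (by positivity) hslack

/-- A closed bipartite `(D+1)`-colored graph with `2k` vertices having no
face with exactly two vertices has degree at least `D·(D−1)!/2`. -/
theorem no_short_face_degree_lower_bound (D k : ℕ) (hD : 3 ≤ D) (hk : 1 ≤ k)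
    (σ : Fin (D + 1) → Equiv.Perm (Fin k)) (hF₁ : facesLen D k σ 1 = 0) :
    (D : ℚ) * ((D - 1).factorial : ℚ) / 2 ≤ degree D k σ :=
  no_short_face_degree_lower_bound_general D k hD σ hF₁
end
end

section
/- Let D ≥ 3, k ≥ 1, let G be a closed bipartite (D+1)-colored graph with 2k vertices, and let G' be the graph obtained from G by insertion of a fundamental melon on the edge of some color c₀ at some black vertex i₀. Then G' has 2(k+1) vertices, its total face count satisfies F(G') = F(G) + D(D−1)/2, its degree is unchanged, ω(G') = ω(G), and G' is connected if and only if G is connected. -/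
open scoped Classical

noncomputable section

/-!
For colors `c₁ c₂ ≠ c₀` the two new vertices form a new face of length one, so the face
permutation gains a fixed point. For a pair involving `c₀` the face permutation is the old one
with the new point spliced into the cycle through `i₀` (a product with a transposition moving a
fixed point), which keeps the number of cycles. Hence `F` grows by `D.choose 2`, exactly
compensating the growth of `k` in `ω`. For connectivity, contracting the melon onto `i₀` maps
paths of `G'` to paths of `G`, and conversely each edge of `G` at `i₀` lifts through the melon.
-/

open Equiv Equiv.Perm Finset Relation

namespace Equiv.Perm

variable {α : Type*} {f g : Perm α} {a b x y : α}

theorem SameCycle.of_forall_sameCycle_apply (h : ∀ z, f.SameCycle z (g z))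
    (hxy : g.SameCycle x y) : f.SameCycle x y := by
  obtain ⟨i, rfl⟩ := hxy
  induction i using Int.induction_on with
  | zero => exact SameCycle.refl _ _
  | succ i ih =>
    have hi := h ((g ^ (i : ℤ)) x)
    rw [← mul_apply, ← zpow_one_add, add_comm] at hi
    exact ih.trans hi
  | pred i ih =>
    have hi := h ((g ^ (-(i : ℤ) - 1)) x)
    rw [← mul_apply, ← zpow_one_add, add_sub_cancel] at hi
    exact ih.trans hi.symm

variable [DecidableEq α] [Fintype α]

theorem support_mul_swap (hab : a ≠ b) (hb : g b = b) :
    (g * swap a b).support = insert a (insert b g.support) := by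
  have hga : g a ≠ b := fun h => hab (g.injective (h.trans hb.symm))
  ext y
  rcases eq_or_ne y a with rfl | hya
  · simp [hb, hab.symm]
  rcases eq_or_ne y b with rfl | hyb
  · simp [hga]
  · simp [swap_apply_of_ne_of_ne hya hyb, hya, hyb]

theorem card_support_mul_swap (ha : a ∈ g.support) (hb : b ∉ g.support) :
    #(g * swap a b).support = #g.support + 1 := by
  rw [support_mul_swap (ne_of_mem_of_not_mem ha hb) (notMem_support.mp hb), insert_eq_of_mem
    (mem_insert_of_mem ha), card_insert_of_notMem hb]

theorem IsCycle.mul_swap (hg : g.IsCycle) (ha : a ∈ g.support)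
    (hb : b ∉ g.support) : (g * swap a b).IsCycle := by
  have hab : a ≠ b := ne_of_mem_of_not_mem ha hb
  have hgb : g b = b := notMem_support.mp hb
  have hstep : ∀ z, (g * swap a b).SameCycle z (g z) := by
    intro z
    rcases eq_or_ne z a with rfl | hza
    · exact ⟨2, by simp [pow_two, mul_apply, hgb]⟩
    rcases eq_or_ne z b with rfl | hzb
    · rw [hgb]
    · exact ⟨1, by simp [swap_apply_of_ne_of_ne hza hzb]⟩
  refine ⟨a, by simpa [hgb] using hab.symm, fun y hy => ?_⟩
  rw [← mem_support, support_mul_swap hab hgb, mem_insert, mem_insert] at hy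
  rcases hy with rfl | rfl | hy
  · exact SameCycle.refl _ _
  · exact ⟨1, by simp [hgb]⟩
  · exact (hg.sameCycle (mem_support.mp ha) (mem_support.mp hy)).of_forall_sameCycle_apply hstep

end Equiv.Perm

section NumCycles

variable {n : ℕ}

theorem numCycles_eq_card_cycleType_add (g : Perm (Fin n)) :
    numCycles g = Multiset.card g.cycleType + (n - #g.support) := by
  have hfix : (univ.filter fun i => g i = i) = g.supportᶜ := by
    ext i
    simp [mem_support]
  rw [numCycles, hfix, card_compl, Fintype.card_fin]

theorem numCycles_inv (g : Perm (Fin n)) : numCycles g⁻¹ = numCycles g := by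
  simp only [numCycles_eq_card_cycleType_add, cycleType_inv, support_inv]

theorem Equiv.Perm.Disjoint.numCycles_mul_add {g h : Perm (Fin n)} (hgh : g.Disjoint h) :
    numCycles (g * h) + n = numCycles g + numCycles h := by
  have hcard : #g.support + #h.support ≤ n := by
    simpa [hgh.support_mul, card_union_of_disjoint (disjoint_iff_disjoint_support.mp hgh)]
      using card_le_univ (g * h).support
  simp only [numCycles_eq_card_cycleType_add, hgh.cycleType_mul, hgh.support_mul,
    card_union_of_disjoint (disjoint_iff_disjoint_support.mp hgh), Multiset.card_add]
  omega

theorem Equiv.Perm.IsCycle.numCycles_eq {g : Perm (Fin n)} (hg : g.IsCycle) :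
    numCycles g = 1 + (n - #g.support) := by
  rw [numCycles_eq_card_cycleType_add, card_cycleType_eq_one.mpr hg]

theorem Equiv.Perm.IsCycle.numCycles_mul_swap_add_one {c : Perm (Fin n)} (hc : c.IsCycle)
    {a b : Fin n} (ha : a ∈ c.support) (hb : b ∉ c.support) :
    numCycles (c * swap a b) + 1 = numCycles c := by
  have hcard := card_support_mul_swap ha hb
  have hle : #(c * swap a b).support ≤ n := by simpa using card_le_univ (c * swap a b).support
  rw [(hc.mul_swap ha hb).numCycles_eq, hc.numCycles_eq]
  omega

/-- Multiplying by a transposition with a fixed point of `g` merges that point into a cycle. -/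
theorem numCycles_mul_swap_add_one (g : Perm (Fin n)) {a b : Fin n} (hab : a ≠ b)
    (hb : g b = b) : numCycles (g * swap a b) + 1 = numCycles g := by
  by_cases ha : g a = a
  · have hd : g.Disjoint (swap a b) := fun x => by
      by_cases hxa : x = a
      · exact .inl (hxa ▸ ha)
      by_cases hxb : x = b
      · exact .inl (hxb ▸ hb)
      exact .inr (swap_apply_of_ne_of_ne hxa hxb)
    have hswap := (isCycle_swap hab).numCycles_eq
    rw [card_support_swap hab] at hswap
    have := hd.numCycles_mul_add
    have : 2 ≤ n := by simpa [card_pair hab] using card_le_univ {a, b}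
    omega
  · set c := g.cycleOf a
    set d := g * c⁻¹
    have hdc : d.Disjoint c :=
      disjoint_mul_inv_of_mem_cycleFactorsFinset (cycleOf_mem_cycleFactorsFinset_iff.mpr
        (mem_support.mpr ha))
    have hac : a ∈ c.support := mem_support_cycleOf_iff.mpr ⟨.refl _ _, mem_support.mpr ha⟩
    have hbc : b ∉ c.support := fun h => mem_support.mp (support_cycleOf_le g a h) hb
    have hcb : c b = b := notMem_support.mp hbc
    have hdb : d b = b := by simp [d, mul_apply, inv_eq_iff_eq.mpr hcb.symm, hb]
    have had : a ∉ d.support := disjoint_right.mp (disjoint_iff_disjoint_support.mp hdc) hac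
    have hdc' : d.Disjoint (c * swap a b) := by
      rw [disjoint_iff_disjoint_support, support_mul_swap hab hcb, disjoint_insert_right,
        disjoint_insert_right]
      exact ⟨had, notMem_support.mpr hdb, disjoint_iff_disjoint_support.mp hdc⟩
    have hgc : g = d * c := (inv_mul_cancel_right g c).symm
    have hsplit : numCycles g + n = numCycles d + numCycles c := hgc ▸ hdc.numCycles_mul_add
    have hsplit' : numCycles (g * swap a b) + n = numCycles d + numCycles (c * swap a b) := by
      rw [hgc, mul_assoc]
      exact hdc'.numCycles_mul_add
    have hc : c.IsCycle := isCycle_cycleOf g ha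
    have := hc.numCycles_mul_swap_add_one hac hbc
    omega

def Equiv.Perm.extendLast (ρ : Perm (Fin n)) : Perm (Fin (n + 1)) :=
  ρ.extendDomain (finSuccAboveEquiv (Fin.last n))

namespace Equiv.Perm

@[simp]
theorem extendLast_apply_castSucc (ρ : Perm (Fin n)) (i : Fin n) :
    ρ.extendLast i.castSucc = (ρ i).castSucc := by
  simpa [extendLast, finSuccAboveEquiv_apply] using
    extendDomain_apply_image ρ (finSuccAboveEquiv (Fin.last n)) i

@[simp]
theorem extendLast_apply_last (ρ : Perm (Fin n)) : ρ.extendLast (Fin.last n) = Fin.last n :=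
  extendDomain_apply_not_subtype _ _ (by simp)

@[simp]
theorem extendLast_mul (ρ ρ' : Perm (Fin n)) :
    (ρ * ρ').extendLast = ρ.extendLast * ρ'.extendLast :=
  (extendDomain_mul _ _ _).symm

@[simp]
theorem extendLast_inv (ρ : Perm (Fin n)) : ρ⁻¹.extendLast = ρ.extendLast⁻¹ :=
  (extendDomain_inv _ _).symm

theorem eq_extendLast {ρ : Perm (Fin n)} {π : Perm (Fin (n + 1))}
    (hcast : ∀ i, π i.castSucc = (ρ i).castSucc) (hlast : π (Fin.last n) = Fin.last n) :
    π = ρ.extendLast := by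
  ext x
  cases x using Fin.lastCases <;> simp [hcast, hlast]

end Equiv.Perm

theorem numCycles_extendLast (ρ : Perm (Fin n)) : numCycles ρ.extendLast = numCycles ρ + 1 := by
  have hcard := card_le_univ ρ.support
  rw [numCycles_eq_card_cycleType_add, numCycles_eq_card_cycleType_add, extendLast,
    cycleType_extendDomain, card_support_extend_domain]
  simp only [Fintype.card_fin] at hcard
  omega

theorem numCycles_extendLast_mul_swap (ρ : Perm (Fin n)) (i : Fin n) :
    numCycles (ρ.extendLast * swap i.castSucc (Fin.last n)) = numCycles ρ := by
  have := numCycles_mul_swap_add_one ρ.extendLast (Fin.castSucc_lt_last i).ne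
    (extendLast_apply_last ρ)
  rw [numCycles_extendLast] at this
  omega

end NumCycles

theorem faceCount_comm {D k : ℕ} (σ : Fin (D + 1) → Perm (Fin k)) (c₁ c₂ : Fin (D + 1)) :
    faceCount D k σ c₁ c₂ = faceCount D k σ c₂ c₁ := by
  rw [faceCount, faceCount, ← numCycles_inv, mul_inv_rev, inv_inv]

theorem degree_eq_of_totalFaces_eq {D k : ℕ} {σ : Fin (D + 1) → Perm (Fin k)}
    {τ : Fin (D + 1) → Perm (Fin (k + 1))}
    (h : totalFaces D (k + 1) τ = totalFaces D k σ + D.choose 2) :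
    degree D (k + 1) τ = degree D k σ := by
  rw [degree, degree, h]
  push_cast [Nat.cast_choose_two]
  ring

theorem Relation.EqvGen.lift' {α β : Type*} {r : α → α → Prop} {p : β → β → Prop} (f : α → β)
    (h : ∀ a b, r a b → EqvGen p (f a) (f b)) {a b : α} (hab : EqvGen r a b) :
    EqvGen p (f a) (f b) := by
  induction hab with
  | rel a b hab => exact h a b hab
  | refl a => exact .refl _
  | symm a b _ ih => exact ih.symm
  | trans a b c _ _ ihab ihbc => exact ihab.trans _ _ _ ihbc

theorem exists_mem_closure_smul_eq_iff_eqvGen {G α : Type*} [Group G] [MulAction G α]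
    (S : Set G) (i j : α) :
    (∃ g ∈ Subgroup.closure S, g • i = j) ↔ EqvGen (fun a b => ∃ g ∈ S, g • a = b) i j := by
  constructor
  · rintro ⟨g, hg, rfl⟩
    induction hg using Subgroup.closure_induction generalizing i with
    | mem g hg => exact .rel _ _ ⟨g, hg, rfl⟩
    | one => simpa using .refl i
    | mul g h _ _ ihg ihh => simpa [mul_smul] using (ihh i).trans _ _ _ (ihg (h • i))
    | inv g _ ih => simpa using (ih (g⁻¹ • i)).symm
  · intro h
    induction h with
    | rel a b hab =>
      obtain ⟨g, hg, rfl⟩ := hab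
      exact ⟨g, Subgroup.subset_closure hg, rfl⟩
    | refl a => exact ⟨1, one_mem _, one_smul _ _⟩
    | symm a b _ ih =>
      obtain ⟨g, hg, rfl⟩ := ih
      exact ⟨g⁻¹, inv_mem hg, inv_smul_smul g a⟩
    | trans a b c _ _ ihab ihbc =>
      obtain ⟨g, hg, rfl⟩ := ihab
      obtain ⟨g', hg', rfl⟩ := ihbc
      exact ⟨g' * g, mul_mem hg' hg, mul_smul g' g a⟩

def SharesWhiteVertex {D k : ℕ} (σ : Fin (D + 1) → Perm (Fin k)) (i j : Fin k) : Prop :=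
  ∃ c c', σ c i = σ c' j

theorem connected_iff_eqvGen {D k : ℕ} (σ : Fin (D + 1) → Perm (Fin k)) :
    Connected D k σ ↔ ∀ i j, EqvGen (SharesWhiteVertex σ) i j := by
  have hrel : (fun a b => ∃ g ∈ {g : Perm (Fin k) | ∃ c c' : Fin (D + 1), g = (σ c')⁻¹ * σ c},
      g • a = b) = SharesWhiteVertex σ := by
    ext a b
    simp [SharesWhiteVertex, Perm.smul_def, symm_apply_eq]
  simp only [Connected, ← Perm.smul_def, exists_mem_closure_smul_eq_iff_eqvGen, hrel]

/-- The new black and white vertices are both `Fin.last k`; they are joined by edges of all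
colors `c ≠ c₀`, while the edge of color `c₀` at `i₀` is rerouted through them. -/
def insertMelon {D k : ℕ} (σ : Fin (D + 1) → Perm (Fin k)) (c₀ : Fin (D + 1)) (i₀ : Fin k) :
    Fin (D + 1) → Perm (Fin (k + 1)) :=
  Function.update (fun c => (σ c).extendLast) c₀
    ((σ c₀).extendLast * swap i₀.castSucc (Fin.last k))

section insertMelon

variable {D k : ℕ} {σ : Fin (D + 1) → Perm (Fin k)} {c₀ c : Fin (D + 1)} {i₀ : Fin k}

theorem insertMelon_of_ne (hc : c ≠ c₀) : insertMelon σ c₀ i₀ c = (σ c).extendLast :=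
  Function.update_of_ne hc _ _

theorem insertMelon_self :
    insertMelon σ c₀ i₀ c₀ = (σ c₀).extendLast * swap i₀.castSucc (Fin.last k) :=
  Function.update_self _ _ _

theorem eq_insertMelon {τ : Fin (D + 1) → Perm (Fin (k + 1))}
    (hne : ∀ c : Fin (D + 1), c ≠ c₀ →
      (∀ i : Fin k, τ c i.castSucc = (σ c i).castSucc) ∧ τ c (Fin.last k) = Fin.last k)
    (h₁ : τ c₀ i₀.castSucc = Fin.last k)
    (h₂ : τ c₀ (Fin.last k) = (σ c₀ i₀).castSucc)
    (h₃ : ∀ i : Fin k, i ≠ i₀ → τ c₀ i.castSucc = (σ c₀ i).castSucc) :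
    τ = insertMelon σ c₀ i₀ := by
  funext c
  rcases eq_or_ne c c₀ with rfl | hc
  · rw [insertMelon_self]
    ext x
    cases x using Fin.lastCases with
    | last => simp [h₂]
    | cast i =>
      rcases eq_or_ne i i₀ with rfl | hi
      · simp [h₁]
      · simp [h₃ i hi, swap_apply_of_ne_of_ne, hi, (Fin.castSucc_lt_last i).ne]
  · rw [insertMelon_of_ne hc]
    exact eq_extendLast (hne c hc).1 (hne c hc).2


theorem faceCount_insertMelon_of_ne_of_ne {c₁ c₂ : Fin (D + 1)} (h₁ : c₁ ≠ c₀) (h₂ : c₂ ≠ c₀) :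
    faceCount D (k + 1) (insertMelon σ c₀ i₀) c₁ c₂ = faceCount D k σ c₁ c₂ + 1 := by
  rw [faceCount, faceCount, insertMelon_of_ne h₁, insertMelon_of_ne h₂, ← extendLast_inv,
    ← extendLast_mul, numCycles_extendLast]

theorem faceCount_insertMelon_self_left (hc : c ≠ c₀) :
    faceCount D (k + 1) (insertMelon σ c₀ i₀) c₀ c = faceCount D k σ c₀ c := by
  rw [faceCount, faceCount, insertMelon_of_ne hc, insertMelon_self, ← mul_assoc,
    ← extendLast_inv, ← extendLast_mul, numCycles_extendLast_mul_swap]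

theorem faceCount_insertMelon {c₁ c₂ : Fin (D + 1)} (hc : c₁ ≠ c₂) :
    faceCount D (k + 1) (insertMelon σ c₀ i₀) c₁ c₂ =
      faceCount D k σ c₁ c₂ + if c₁ ≠ c₀ ∧ c₂ ≠ c₀ then 1 else 0 := by
  by_cases h₁ : c₁ = c₀
  · subst h₁
    simp [faceCount_insertMelon_self_left hc.symm]
  by_cases h₂ : c₂ = c₀
  · subst h₂
    simp [faceCount_comm _ c₁, faceCount_insertMelon_self_left h₁]
  · simp [faceCount_insertMelon_of_ne_of_ne h₁ h₂, h₁, h₂]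

theorem totalFaces_insertMelon :
    totalFaces D (k + 1) (insertMelon σ c₀ i₀) = totalFaces D k σ + D.choose 2 := by
  have hpairs : #{p ∈ univ.filter (fun p : Fin (D + 1) × Fin (D + 1) => p.1 < p.2) |
      p.1 ≠ c₀ ∧ p.2 ≠ c₀} = D.choose 2 := by
    have hcard : #(univ.erase c₀) = D := by simp
    calc _ = #{p ∈ univ.erase c₀ ×ˢ univ.erase c₀ | p.1 < p.2} := ?_
      _ = D.choose 2 := by rw [card_product_filter_lt, hcard]
    congr 1
    ext p
    simp only [mem_filter, mem_univ, true_and, mem_product, mem_erase]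
    tauto
  rw [totalFaces, totalFaces,
    sum_congr rfl fun p hp => faceCount_insertMelon (mem_filter.mp hp).2.ne, sum_add_distrib,
    sum_boole, Nat.cast_id, hpairs]


/-- Contracting the melon onto `i₀` by `Fin.lastCases i₀ id` turns every edge of the new graph
into an edge of the old one, except the edges ending at the new white vertex. -/
theorem insertMelon_apply (c : Fin (D + 1)) (x : Fin (k + 1)) :
    insertMelon σ c₀ i₀ c x = (σ c (Fin.lastCases i₀ id x)).castSucc ∨
      (insertMelon σ c₀ i₀ c x = Fin.last k ∧ Fin.lastCases i₀ id x = i₀) := by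
  rcases eq_or_ne c c₀ with rfl | hc
  · rw [insertMelon_self]
    cases x using Fin.lastCases with
    | last => simp
    | cast i =>
      rcases eq_or_ne i i₀ with rfl | hi
      · simp
      · simp [swap_apply_of_ne_of_ne, hi, (Fin.castSucc_lt_last i).ne]
  · rw [insertMelon_of_ne hc]
    cases x using Fin.lastCases <;> simp

theorem eqvGen_lastCases_of_sharesWhiteVertex_insertMelon {x y : Fin (k + 1)}
    (h : SharesWhiteVertex (insertMelon σ c₀ i₀) x y) :
    EqvGen (SharesWhiteVertex σ) (Fin.lastCases i₀ id x) (Fin.lastCases i₀ id y) := by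
  obtain ⟨c, c', hxy⟩ := h
  rcases insertMelon_apply c x with hx | ⟨hx, hpx⟩ <;>
    rcases insertMelon_apply c' y with hy | ⟨hy, hpy⟩
  · exact .rel _ _ ⟨c, c', Fin.castSucc_injective _ (hx.symm.trans (hxy.trans hy))⟩
  · exact absurd (hx.symm.trans (hxy.trans hy)) (Fin.castSucc_ne_last _)
  · exact absurd (hy.symm.trans (hxy.symm.trans hx)) (Fin.castSucc_ne_last _)
  · rw [hpx, hpy]
    exact .refl _

theorem sharesWhiteVertex_insertMelon_castSucc_last (hc : c ≠ c₀) :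
    SharesWhiteVertex (insertMelon σ c₀ i₀) i₀.castSucc (Fin.last k) :=
  ⟨c₀, c, by simp [insertMelon_self, insertMelon_of_ne hc]⟩

theorem exists_eqvGen_insertMelon_apply_eq {c' : Fin (D + 1)} (hc' : c' ≠ c₀)
    (c : Fin (D + 1)) (i : Fin k) :
    ∃ x, EqvGen (SharesWhiteVertex (insertMelon σ c₀ i₀)) i.castSucc x ∧
      insertMelon σ c₀ i₀ c x = (σ c i).castSucc := by
  by_cases h : c = c₀ ∧ i = i₀
  · obtain ⟨rfl, rfl⟩ := h
    exact ⟨Fin.last k, .rel _ _ (sharesWhiteVertex_insertMelon_castSucc_last hc'),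
      by simp [insertMelon_self]⟩
  · refine ⟨i.castSucc, .refl _, ?_⟩
    rcases eq_or_ne c c₀ with rfl | hc
    · have hi : i ≠ i₀ := fun hi => h ⟨rfl, hi⟩
      simp [insertMelon_self, swap_apply_of_ne_of_ne, hi, (Fin.castSucc_lt_last i).ne]
    · simp [insertMelon_of_ne hc]

theorem eqvGen_castSucc_of_sharesWhiteVertex {c' : Fin (D + 1)} (hc' : c' ≠ c₀) {i j : Fin k}
    (h : SharesWhiteVertex σ i j) :
    EqvGen (SharesWhiteVertex (insertMelon σ c₀ i₀)) i.castSucc j.castSucc := by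
  obtain ⟨c₁, c₂, h⟩ := h
  obtain ⟨x, hix, hx⟩ := exists_eqvGen_insertMelon_apply_eq (i₀ := i₀) hc' c₁ i
  obtain ⟨y, hjy, hy⟩ := exists_eqvGen_insertMelon_apply_eq (i₀ := i₀) hc' c₂ j
  exact hix.trans _ _ _ ((EqvGen.rel _ _ ⟨c₁, c₂, by rw [hx, hy, h]⟩).trans _ _ _ hjy.symm)

theorem connected_insertMelon_iff (hD : 0 < D) :
    Connected D (k + 1) (insertMelon σ c₀ i₀) ↔ Connected D k σ := by
  have : Nontrivial (Fin (D + 1)) := Fin.nontrivial_iff_two_le.mpr (by omega)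
  obtain ⟨c, hc⟩ := exists_ne c₀
  rw [connected_iff_eqvGen, connected_iff_eqvGen]
  constructor
  · intro h i j
    simpa using (h i.castSucc j.castSucc).lift' (Fin.lastCases i₀ id)
      fun _ _ => eqvGen_lastCases_of_sharesWhiteVertex_insertMelon
  · intro h x y
    have hcollapse : ∀ x, EqvGen (SharesWhiteVertex (insertMelon σ c₀ i₀)) x
        (Fin.lastCases i₀ id x : Fin k).castSucc := by
      intro x
      cases x using Fin.lastCases with
      | last => simpa using (EqvGen.rel _ _ (sharesWhiteVertex_insertMelon_castSucc_last hc)).symm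
      | cast i => simpa using .refl _
    exact (hcollapse x).trans _ _ _ (((h _ _).lift' Fin.castSucc
      fun _ _ => eqvGen_castSucc_of_sharesWhiteVertex hc).trans _ _ _ (hcollapse y).symm)

end insertMelon

theorem melon_insertion_invariants_general (D k : ℕ) (hD : 3 ≤ D)
    (σ : Fin (D + 1) → Equiv.Perm (Fin k)) (c₀ : Fin (D + 1)) (i₀ : Fin k)
    (τ : Fin (D + 1) → Equiv.Perm (Fin (k + 1)))
    (hne : ∀ c : Fin (D + 1), c ≠ c₀ →
      (∀ i : Fin k, τ c i.castSucc = (σ c i).castSucc) ∧ τ c (Fin.last k) = Fin.last k)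
    (h₁ : τ c₀ i₀.castSucc = Fin.last k)
    (h₂ : τ c₀ (Fin.last k) = (σ c₀ i₀).castSucc)
    (h₃ : ∀ i : Fin k, i ≠ i₀ → τ c₀ i.castSucc = (σ c₀ i).castSucc) :
    totalFaces D (k + 1) τ = totalFaces D k σ + D * (D - 1) / 2 ∧
    degree D (k + 1) τ = degree D k σ ∧
    (Connected D (k + 1) τ ↔ Connected D k σ) := by
  obtain rfl := eq_insertMelon hne h₁ h₂ h₃
  exact ⟨Nat.choose_two_right D ▸ totalFaces_insertMelon,
    degree_eq_of_totalFaces_eq totalFaces_insertMelon, connected_insertMelon_iff (by omega)⟩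

/-- Let `G'` (encoded by `τ` on `Fin (k+1)`, hence with `2(k+1)` vertices)
be obtained from `G` (encoded by `σ` on `Fin k`) by insertion of a fundamental melon on the
edge of color `c₀` at the black vertex `i₀`: for `c ≠ c₀` the permutation `τ c` agrees with
`σ c` on `Fin k` and fixes the new point, while `τ c₀` sends `i₀` to the new point, the new
point to `σ c₀ i₀`, and agrees with `σ c₀` elsewhere.  Then `F(G') = F(G) + D(D−1)/2`,
`ω(G') = ω(G)`, and `G'` is connected iff `G` is. -/
theorem melon_insertion_invariants (D k : ℕ) (hD : 3 ≤ D) (hk : 1 ≤ k)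
    (σ : Fin (D + 1) → Equiv.Perm (Fin k)) (c₀ : Fin (D + 1)) (i₀ : Fin k)
    (τ : Fin (D + 1) → Equiv.Perm (Fin (k + 1)))
    (hne : ∀ c : Fin (D + 1), c ≠ c₀ →
      (∀ i : Fin k, τ c i.castSucc = (σ c i).castSucc) ∧ τ c (Fin.last k) = Fin.last k)
    (h₁ : τ c₀ i₀.castSucc = Fin.last k)
    (h₂ : τ c₀ (Fin.last k) = (σ c₀ i₀).castSucc)
    (h₃ : ∀ i : Fin k, i ≠ i₀ → τ c₀ i.castSucc = (σ c₀ i).castSucc) :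
    totalFaces D (k + 1) τ = totalFaces D k σ + D * (D - 1) / 2 ∧
    degree D (k + 1) τ = degree D k σ ∧
    (Connected D (k + 1) τ ↔ Connected D k σ) :=
  melon_insertion_invariants_general D k hD σ c₀ i₀ τ hne h₁ h₂ h₃
end
end
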